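/- arXiv:1202.4367 — 3 statements merged into one kernel-verified Lean document; each statement's English description precedes it below -/
import Mathlib

section
/- Let A → B be a homomorphism of commutative rings and M ⊆ B a multiplicative submonoid; set N = { m₁ ⊗ m₂ : m₁, m₂ ∈ M } ⊆ B ⊗_A B. Then the kernel of the multiplication map M⁻¹B ⊗_A M⁻¹B → M⁻¹B is generated, as an ideal, by the image of ker(B ⊗_A B → B) under the canonical map B ⊗_A B → M⁻¹B ⊗_A M⁻¹B (equivalently, it is the localization of ker μ_B at N). In particular, if ker μ_B is a finitely generated ideal, so is the kernel of multiplication for M⁻¹B. -/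
open scoped TensorProduct

/-- Let `L` be the localization of `B` at a multiplicative submonoid `M`.  The kernel of the
multiplication map `L ⊗[A] L → L` is generated by the image of the kernel of the
multiplication map `B ⊗[A] B → B` under the canonical map `B ⊗[A] B → L ⊗[A] L`.
In particular, if the latter kernel is a finitely generated ideal, so is the former. -/
theorem ker_mul_tensor_localization {A B L : Type*} [CommRing A] [CommRing B] [CommRing L]
    [Algebra A B] (M : Submonoid B) [Algebra B L] [IsLocalization M L] [Algebra A L]
    [IsScalarTower A B L] :
    RingHom.ker (Algebra.TensorProduct.lmul' A : L ⊗[A] L →ₐ[A] L) =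
        Ideal.map
          (Algebra.TensorProduct.map (IsScalarTower.toAlgHom A B L)
            (IsScalarTower.toAlgHom A B L))
          (RingHom.ker (Algebra.TensorProduct.lmul' A : B ⊗[A] B →ₐ[A] B)) ∧
      ((RingHom.ker (Algebra.TensorProduct.lmul' A : B ⊗[A] B →ₐ[A] B)).FG →
        (RingHom.ker (Algebra.TensorProduct.lmul' A : L ⊗[A] L →ₐ[A] L)).FG) := by
  set f := IsScalarTower.toAlgHom A B L with hf
  set φ := Algebra.TensorProduct.map f f with hφ
  have hcomm : (Algebra.TensorProduct.lmul' A (S := L)).comp φ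
      = f.comp (Algebra.TensorProduct.lmul' A) := by
    ext b <;> simp [φ, f]
  -- units
  have hunit : ∀ m : M, IsUnit ((algebraMap B L m) ⊗ₜ[A] (1 : L)) := by
    intro m
    have := (IsLocalization.map_units L m).map
      (Algebra.TensorProduct.includeLeft (R := A) (S := A) : L →ₐ[A] L ⊗[A] L)
    simpa using this
  have hunit' : ∀ m : M, IsUnit ((1 : L) ⊗ₜ[A] (algebraMap B L m)) := by
    intro m
    have := (IsLocalization.map_units L m).map
      (Algebra.TensorProduct.includeRight (R := A) : L →ₐ[A] L ⊗[A] L)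
    simpa using this
  have hφt : ∀ b b' : B, φ (b ⊗ₜ[A] b') = (algebraMap B L b) ⊗ₜ[A] (algebraMap B L b') := by
    intro b b'; simp [φ, f]
  -- clearing denominators
  have hclear : ∀ x : L ⊗[A] L, ∃ (m m' : M) (z : B ⊗[A] B),
      φ z = ((algebraMap B L m) ⊗ₜ[A] (algebraMap B L m')) * x := by
    intro x
    induction x using TensorProduct.induction_on with
    | zero => exact ⟨1, 1, 0, by simp⟩
    | tmul l l' =>
      obtain ⟨⟨b, m⟩, hb⟩ := IsLocalization.surj M l
      obtain ⟨⟨b', m'⟩, hb'⟩ := IsLocalization.surj M l'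
      refine ⟨m, m', b ⊗ₜ b', ?_⟩
      simp only [φ, Algebra.TensorProduct.map_tmul]
      rw [Algebra.TensorProduct.tmul_mul_tmul]
      simp only [f, IsScalarTower.coe_toAlgHom', ← hb, ← hb']
      ring_nf
    | add x y hx hy =>
      obtain ⟨m₁, m₁', z₁, h₁⟩ := hx
      obtain ⟨m₂, m₂', z₂, h₂⟩ := hy
      refine ⟨m₁ * m₂, m₁' * m₂',
        ((m₂ : B) ⊗ₜ (m₂' : B)) * z₁ + ((m₁ : B) ⊗ₜ (m₁' : B)) * z₂, ?_⟩
      rw [map_add, map_mul, map_mul, hφt, hφt, h₁, h₂, Submonoid.coe_mul, Submonoid.coe_mul,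
        map_mul, map_mul, ← Algebra.TensorProduct.tmul_mul_tmul]
      ring
  have hmain : RingHom.ker (Algebra.TensorProduct.lmul' A : L ⊗[A] L →ₐ[A] L) =
      Ideal.map φ (RingHom.ker (Algebra.TensorProduct.lmul' A : B ⊗[A] B →ₐ[A] B)) := by
    apply le_antisymm
    · intro x hx
      rw [RingHom.mem_ker] at hx
      obtain ⟨m, m', z, hz⟩ := hclear x
      have hz0 : algebraMap B L ((Algebra.TensorProduct.lmul' A : B ⊗[A] B →ₐ[A] B) z) = 0 := by
        have := congrArg (Algebra.TensorProduct.lmul' A (S := L)) hz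
        rw [← AlgHom.comp_apply, hcomm, AlgHom.comp_apply] at this
        simp only [map_mul, Algebra.TensorProduct.lmul'_apply_tmul, hx, mul_zero] at this
        simpa [f] using this
      obtain ⟨m'', hm''⟩ := (IsLocalization.map_eq_zero_iff M L _).mp hz0
      have hker : ((m'' : B) ⊗ₜ[A] (1 : B)) * z ∈
          RingHom.ker (Algebra.TensorProduct.lmul' A : B ⊗[A] B →ₐ[A] B) := by
        rw [RingHom.mem_ker, map_mul, Algebra.TensorProduct.lmul'_apply_tmul]
        simpa using hm''
      have hmem : φ (((m'' : B) ⊗ₜ[A] (1 : B)) * z) ∈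
          Ideal.map φ (RingHom.ker (Algebra.TensorProduct.lmul' A : B ⊗[A] B →ₐ[A] B)) :=
        Ideal.mem_map_of_mem _ hker
      have hrw : φ (((m'' : B) ⊗ₜ[A] (1 : B)) * z)
          = (((algebraMap B L m'') ⊗ₜ[A] (1 : L)) * ((algebraMap B L m) ⊗ₜ[A] (algebraMap B L m'))) * x := by
        rw [map_mul, hz, ← mul_assoc, hφt]
        simp
      rw [hrw] at hmem
      have hu : IsUnit (((algebraMap B L m'') ⊗ₜ[A] (1 : L)) * ((algebraMap B L m) ⊗ₜ[A] (algebraMap B L m'))) := by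
        have : ((algebraMap B L m) ⊗ₜ[A] (algebraMap B L m')) =
            ((algebraMap B L m) ⊗ₜ[A] (1:L)) * ((1:L) ⊗ₜ[A] (algebraMap B L m')) := by
          rw [Algebra.TensorProduct.tmul_mul_tmul]; simp
        rw [this]
        exact (hunit m'').mul ((hunit m).mul (hunit' m'))
      have := Ideal.mul_mem_left _ (↑hu.unit⁻¹) hmem
      rwa [← mul_assoc, IsUnit.val_inv_mul, one_mul] at this
    · rw [Ideal.map_le_iff_le_comap]
      intro z hz
      rw [RingHom.mem_ker] at hz
      simp only [Ideal.mem_comap, RingHom.mem_ker]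
      have := congrFun (congrArg (DFunLike.coe) hcomm) z
      simp only [AlgHom.comp_apply] at this
      rw [this, hz, map_zero]
  exact ⟨hmain, fun h => hmain ▸ Ideal.FG.map h _⟩
end

section
/- Let R be a commutative ring and M a free R-module of rank n, and let 0 ≤ i ≤ n. The exterior multiplication map Λ^i M ⊗_R Λ^{n-i} M → Λ^n M induces an isomorphism of R-modules Λ^i M ≅ Hom_R(Λ^{n-i} M, Λ^n M). -/
/-!
In the bases of `⋀^i M` and `⋀^j M` induced by a basis of `M`, indexed by the `i`- and
`j`-element subsets of `Fin n`, the product `e_S ∧ e_T` vanishes unless `T` is the complement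
of `S`, and then it is `± e_{Fin n}`, a generator of the free rank-one module `⋀^n M`. So the
matrix of the pairing is a permutation matrix with entries `±1`, and the pairing is perfect.
-/

open ExteriorAlgebra

/-- Exterior multiplication `⋀^i M ⊗ ⋀^j M → ⋀^(i+j) M`, as a bilinear map. -/
noncomputable def exteriorPowerWedge (R M : Type*) [CommRing R] [AddCommGroup M]
    [Module R M] (i j : ℕ) :
    ⋀[R]^i M →ₗ[R] ⋀[R]^j M →ₗ[R] ⋀[R]^(i + j) M :=
  LinearMap.mk₂ R
    (fun x y =>
      ⟨(x : ExteriorAlgebra R M) * (y : ExteriorAlgebra R M), by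
        have h := Submodule.mul_mem_mul x.2 y.2
        rwa [← pow_add] at h⟩)
    (fun x x' y => Subtype.ext (by simp [add_mul]))
    (fun c x y => Subtype.ext (by simp [smul_mul_assoc]))
    (fun x y y' => Subtype.ext (by simp [mul_add]))
    (fun c x y => Subtype.ext (by simp [mul_smul_comm]))

open Module Set.powersetCard
open Set (powersetCard)

namespace Set.powersetCard

variable {α : Type*} {m n : ℕ}

abbrev uniqueOfCardEq [Fintype α] (h : Fintype.card α = n) : Unique (powersetCard α n) where
  default := ofCard (s := Finset.univ) (by rw [Finset.card_univ, h])
  uniq s := Subtype.ext (Finset.eq_univ_of_card _ ((card_eq s).trans h.symm))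

theorem disjoint_iff_eq_compl [DecidableEq α] [Fintype α] (hm : m + n = Fintype.card α)
    (s : powersetCard α n) (t : powersetCard α m) :
    Disjoint s.val t.val ↔ t = compl hm s := by
  rw [eq_iff_subset, coe_compl, Finset.subset_compl_iff_disjoint_right, disjoint_comm]

end Set.powersetCard

namespace Module.Basis

variable {R M N P ι κ ο : Type*} [CommRing R] [AddCommGroup M] [Module R M]
  [AddCommGroup N] [Module R N] [AddCommGroup P] [Module R P]

theorem bijective_of_pairing_eq_unit_smul [Finite κ] [Unique ο]
    (b : Basis ι R M) (c : Basis κ R N) (ω : Basis ο R P) (e : ι ≃ κ)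
    (f : M →ₗ[R] N →ₗ[R] P) (hdiag : ∀ s, ∃ u : Rˣ, f (b s) (c (e s)) = u • ω default)
    (hoff : ∀ s t, t ≠ e s → f (b s) (c t) = 0) :
    Function.Bijective f := by
  classical
  choose u hu using hdiag
  let toDual : (N →ₗ[R] P) ≃ₗ[R] Dual R N :=
    LinearEquiv.congrRight (ω.equiv (Basis.singleton ο R) (Equiv.refl ο))
  -- Once `Hom(N, P)` is identified with `Dual R N`, `f` maps `b` onto a rescaled dual basis of `c`.
  let d : Basis ι R (Dual R N) := (c.dualBasis.reindex e.symm).unitsSMul u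
  have hf : toDual.toLinearMap ∘ₗ f = (b.equiv d (Equiv.refl ι)).toLinearMap := by
    refine b.ext fun s => c.ext fun t => ?_
    by_cases ht : t = e s
    · subst ht
      simp [toDual, LinearEquiv.congrRight, d, hu, unitsSMul_apply, Units.smul_def]
    · simp [toDual, LinearEquiv.congrRight, d, hoff s t ht, unitsSMul_apply, ht]
  refine (toDual.bijective.of_comp_iff' f).mp ?_
  rw [← LinearEquiv.coe_coe, ← LinearMap.coe_comp, hf]
  exact (b.equiv d (Equiv.refl ι)).bijective

end Module.Basis

section Wedge

variable {R M I : Type*} [CommRing R] [AddCommGroup M] [Module R M] [LinearOrder I] {i j : ℕ}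

theorem exteriorPowerWedge_apply_coe (x : ⋀[R]^i M) (y : ⋀[R]^j M) :
    (exteriorPowerWedge R M i j x y : ExteriorAlgebra R M) = x * y :=
  rfl

theorem exteriorPowerWedge_ιMulti_family_of_not_disjoint (v : I → M) (s : powersetCard I i)
    (t : powersetCard I j) (h : ¬Disjoint s.val t.val) :
    exteriorPowerWedge R M i j (exteriorPower.ιMulti_family R i v s)
      (exteriorPower.ιMulti_family R j v t) = 0 := by
  ext
  rw [exteriorPowerWedge_apply_coe, exteriorPower.ιMulti_family_apply_coe,
    exteriorPower.ιMulti_family_apply_coe, ιMulti_family_mul_of_not_disjoint R v s t h]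
  rfl

theorem exteriorPowerWedge_ιMulti_family_of_disjoint (v : I → M) (s : powersetCard I i)
    (t : powersetCard I j) (h : Disjoint s.val t.val) :
    exteriorPowerWedge R M i j (exteriorPower.ιMulti_family R i v s)
      (exteriorPower.ιMulti_family R j v t) =
      (permOfDisjoint h).sign • exteriorPower.ιMulti_family R (i + j) v (disjUnion h) := by
  ext
  rw [exteriorPowerWedge_apply_coe, exteriorPower.ιMulti_family_apply_coe,
    exteriorPower.ιMulti_family_apply_coe, ιMulti_family_mul_of_disjoint R v s t h]
  rfl

end Wedge

/-- For a free module `M` of rank `n` over a commutative ring and `i + j = n`, exterior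
multiplication induces an isomorphism `⋀^i M ≅ Hom(⋀^j M, ⋀^n M)`. -/
theorem exteriorPower_dual_of_basis {R M : Type*} [CommRing R] [AddCommGroup M] [Module R M]
    {n : ℕ} (b : Module.Basis (Fin n) R M) (i j : ℕ) (hij : i + j = n) :
    Function.Bijective (exteriorPowerWedge R M i j) := by
  subst hij
  let _ := uniqueOfCardEq (α := Fin (i + j)) (Fintype.card_fin _)
  have hcard : j + i = Fintype.card (Fin (i + j)) := by rw [Fintype.card_fin, add_comm]
  refine Basis.bijective_of_pairing_eq_unit_smul (b.exteriorPower i) (b.exteriorPower j)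
    (b.exteriorPower (i + j)) (compl hcard) _ (fun s => ?_) (fun s t ht => ?_)
  · have h := (disjoint_iff_eq_compl hcard s _).mpr rfl
    refine ⟨Units.map (Int.castRingHom R : ℤ →* R) (permOfDisjoint h).sign, ?_⟩
    rw [exteriorPower.coe_basis, exteriorPower.coe_basis, exteriorPower.coe_basis,
      exteriorPowerWedge_ιMulti_family_of_disjoint _ _ _ h, Subsingleton.elim (disjUnion h) default]
    simp [Units.smul_def, Int.cast_smul_eq_zsmul]
  · rw [exteriorPower.coe_basis, exteriorPower.coe_basis]
    exact exteriorPowerWedge_ιMulti_family_of_not_disjoint _ _ _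
      (mt (disjoint_iff_eq_compl hcard s t).mp ht)
end

section
/- Let H be a commutative Artinian ring that is injective as a module over itself (i.e., H is self-injective, equivalently Gorenstein of dimension 0). Then for every finitely generated H-module M, the natural evaluation map M → Hom_H(Hom_H(M, H), H) is an isomorphism. -/
open Module

/-!
Over a self-injective ring, `Dual` is exact, so the bidual of a short exact sequence is short
exact and the four lemma reduces surjectivity of `Dual.eval` to the simple modules of a
composition series. Injectivity of `Dual.eval` comes from the socle: every maximal ideal `𝔪` of
an Artinian ring is the annihilator of some `x`, and for `m ≠ 0` with `torsionOf m ≤ 𝔪` the map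
`R ∙ m → R`, `m ↦ x`, extends to a functional not vanishing at `m`. For simple `S` the dual is
again simple, so `Dual.eval` is a nonzero map between simple modules, hence bijective.
-/

section

variable {R : Type*} [CommRing R]

section Exactness

variable {A B C : Type*} [AddCommGroup A] [AddCommGroup B] [AddCommGroup C]
  [Module R A] [Module R B] [Module R C] {f : A →ₗ[R] B} {g : B →ₗ[R] C}

theorem LinearMap.dualMap_surjective_of_injective_of_selfInjective [Module.Injective R R]
    (hf : Function.Injective f) : Function.Surjective f.dualMap := fun φ ↦
  Module.Injective.extension_property R R A B f hf φ

theorem Function.Exact.dualMap (hfg : Function.Exact f g) (hg : Function.Surjective g) :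
    Function.Exact g.dualMap f.dualMap :=
  LinearMap.exact_lcomp_of_exact_of_surjective R hfg hg

theorem Function.Exact.dualMap_dualMap [Module.Injective R R] (hfg : Function.Exact f g)
    (hf : Function.Injective f) (hg : Function.Surjective g) :
    Function.Exact f.dualMap.dualMap g.dualMap.dualMap :=
  (hfg.dualMap hg).dualMap (f.dualMap_surjective_of_injective_of_selfInjective hf)

theorem Module.Dual.eval_surjective_of_exact [Module.Injective R R] (hfg : Function.Exact f g)
    (hf : Function.Injective f) (hg : Function.Surjective g)
    (hA : Function.Surjective (Dual.eval R A)) (hC : Function.Surjective (Dual.eval R C)) :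
    Function.Surjective (Dual.eval R B) :=
  LinearMap.surjective_of_surjective_of_surjective_of_injective f g (0 : C →ₗ[R] Unit)
    f.dualMap.dualMap g.dualMap.dualMap (0 : Dual R (Dual R C) →ₗ[R] Unit)
    (Dual.eval R A) (Dual.eval R B) (Dual.eval R C) 0
    (Dual.eval_naturality f) (Dual.eval_naturality g) (Subsingleton.elim _ _)
    ((LinearMap.exact_zero_iff_surjective _ g).2 hg) (hfg.dualMap_dualMap hf hg)
    ((LinearMap.exact_zero_iff_surjective _ _).2 <|
      g.dualMap.dualMap_surjective_of_injective_of_selfInjective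
        (g.dualMap_injective_of_surjective hg))
    hA hC (fun _ _ _ ↦ Subsingleton.elim _ _)

end Exactness

section Separation

variable {M : Type*} [AddCommGroup M] [Module R M]

theorem Module.Dual.exists_apply_eq_of_torsionOf_le [Module.Injective R R] {m : M} {x : R}
    (h : Ideal.torsionOf R M m ≤ Ideal.torsionOf R R x) : ∃ φ : Dual R M, φ m = x := by
  let φ₀ := LinearPMap.mkSpanSingleton' (σ := RingHom.id R) m x fun c hc ↦
    (Ideal.mem_torsionOf_iff x c).1 (h <| (Ideal.mem_torsionOf_iff m c).2 hc)
  obtain ⟨φ, hφ⟩ := Module.Injective.extension_property R R _ M φ₀.domain.subtype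
    φ₀.domain.injective_subtype φ₀.toFun
  exact ⟨φ, (LinearMap.congr_fun hφ ⟨m, Submodule.mem_span_singleton_self m⟩).trans
    (LinearPMap.mkSpanSingleton'_apply_self _ _ _ _)⟩

theorem dvd_of_torsionOf_le [Module.Injective R R] {x y : R}
    (h : Ideal.torsionOf R R x ≤ Ideal.torsionOf R R y) : x ∣ y := by
  obtain ⟨φ, hφ⟩ := Dual.exists_apply_eq_of_torsionOf_le h
  exact ⟨φ 1, by rw [← hφ, ← Dual.apply_one_mul_eq, mul_comm]⟩

theorem IsArtinianRing.isFractionRing_self [IsArtinianRing R] : IsFractionRing R R :=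
  IsFractionRing.self_iff_nonZeroDivisors_le_isUnit.2 (IsArtinianRing.isUnitSubmonoid_eq R).ge

theorem IsArtinianRing.exists_torsionOf_eq_of_isMaximal [IsArtinianRing R] (𝔪 : Ideal R)
    [𝔪.IsMaximal] : ∃ x : R, Ideal.torsionOf R R x = 𝔪 := by
  have := IsArtinianRing.isFractionRing_self (R := R)
  obtain ⟨-, x, hx⟩ :=
    isAssociatedPrime_iff.1 (Ideal.IsMaximal.mem_associatedPrimes_of_isFractionRing R 𝔪)
  refine ⟨x, ?_⟩
  ext c
  rw [hx, Ideal.mem_torsionOf_iff, Submodule.mem_colon_singleton, Submodule.mem_bot]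

variable (R) in
theorem Module.Dual.exists_apply_ne_zero [IsArtinianRing R] [Module.Injective R R] {m : M}
    (hm : m ≠ 0) : ∃ φ : Dual R M, φ m ≠ 0 := by
  obtain ⟨𝔪, h𝔪, hle⟩ := Ideal.exists_le_maximal _ ((Ideal.torsionOf_eq_top_iff R m).not.2 hm)
  obtain ⟨x, hx⟩ := IsArtinianRing.exists_torsionOf_eq_of_isMaximal 𝔪
  obtain ⟨φ, hφ⟩ := Dual.exists_apply_eq_of_torsionOf_le (hle.trans hx.ge)
  refine ⟨φ, hφ ▸ fun hx0 ↦ h𝔪.ne_top ?_⟩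
  rw [← hx, hx0, Ideal.torsionOf_zero]

theorem Module.Dual.eval_injective_of_selfInjective [IsArtinianRing R] [Module.Injective R R] :
    Function.Injective (Dual.eval R M) := by
  refine (injective_iff_map_eq_zero _).2 fun m hm ↦ ?_
  by_contra hm0
  obtain ⟨φ, hφ⟩ := Dual.exists_apply_ne_zero R hm0
  exact hφ (LinearMap.congr_fun hm φ)

end Separation

section FiniteLength

variable [IsArtinianRing R] [Module.Injective R R]

/-- Evaluating at a generator `m₀` identifies `Dual R S` with the annihilator of the maximal
ideal `torsionOf m₀` in `R`, and by self-injectivity any two elements of that annihilator are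
proportional. -/
instance Module.Dual.isSimpleModule (S : Type*) [AddCommGroup S] [Module R S]
    [IsSimpleModule R S] : IsSimpleModule R (Dual R S) := by
  have := IsSimpleModule.nontrivial R S
  obtain ⟨m₀, hm₀⟩ := exists_ne (0 : S)
  have h𝔪 : (Ideal.torsionOf R S m₀).IsMaximal :=
    IsSimpleModule.ker_toSpanSingleton_isMaximal R hm₀
  have ext_of_apply {φ ψ : Dual R S} (h : φ m₀ = ψ m₀) : φ = ψ :=
    LinearMap.ext_on (IsSimpleModule.span_singleton_eq_top R hm₀) (Set.eqOn_singleton.2 h)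
  have torsionOf_le (φ : Dual R S) : Ideal.torsionOf R S m₀ ≤ Ideal.torsionOf R R (φ m₀) :=
    fun c hc ↦ by
      rw [Ideal.mem_torsionOf_iff, ← map_smul, (Ideal.mem_torsionOf_iff m₀ c).1 hc, map_zero]
  obtain ⟨φ₀, hφ₀⟩ := Dual.exists_apply_ne_zero R hm₀
  refine isSimpleModule_iff_toSpanSingleton_surjective.2
    ⟨nontrivial_of_ne φ₀ 0 (by rintro rfl; exact hφ₀ rfl), fun φ hφ ψ ↦ ?_⟩
  have hφm₀ : φ m₀ ≠ 0 := fun h ↦ hφ (ext_of_apply (h.trans (LinearMap.zero_apply m₀).symm))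
  have : Ideal.torsionOf R R (φ m₀) = Ideal.torsionOf R S m₀ :=
    (h𝔪.eq_of_le ((Ideal.torsionOf_eq_top_iff R _).not.2 hφm₀) (torsionOf_le φ)).symm
  obtain ⟨c, hc⟩ := dvd_of_torsionOf_le (this.le.trans (torsionOf_le ψ))
  exact ⟨c, ext_of_apply (by simp [hc, mul_comm])⟩

theorem Module.Dual.eval_bijective_of_isSimpleModule (S : Type*) [AddCommGroup S] [Module R S]
    [IsSimpleModule R S] : Function.Bijective (Dual.eval R S) := by
  have := IsSimpleModule.nontrivial R S
  exact LinearMap.bijective_of_ne_zero (LinearMap.ne_zero_of_injective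
    Dual.eval_injective_of_selfInjective)

theorem Module.Dual.eval_bijective_of_isFiniteLength {M : Type*} [AddCommGroup M] [Module R M]
    (hM : IsFiniteLength R M) : Function.Bijective (Dual.eval R M) := by
  induction hM with
  | of_subsingleton =>
    exact ⟨Function.injective_of_subsingleton _, fun _ ↦ ⟨0, Subsingleton.elim _ _⟩⟩
  | @of_simple_quotient _ _ _ N _ _ ih =>
    exact ⟨Dual.eval_injective_of_selfInjective, Dual.eval_surjective_of_exact
      (LinearMap.exact_subtype_mkQ N) N.injective_subtype N.mkQ_surjective ih.2
      (Dual.eval_bijective_of_isSimpleModule _).2⟩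

end FiniteLength

end

/-- Over a commutative Artinian ring `H` that is injective as a module over itself (i.e. a
zero-dimensional Gorenstein ring), every finitely generated module is reflexive: the natural
evaluation map `M → Hom_H(Hom_H(M, H), H)` is an isomorphism. -/
theorem bidual_eval_bijective_of_selfInjective {H : Type*} [CommRing H] [IsArtinianRing H]
    [Module.Injective H H] (M : Type*) [AddCommGroup M] [Module H M] [Module.Finite H M] :
    Function.Bijective (Module.Dual.eval H M) :=
  Dual.eval_bijective_of_isFiniteLength <| isFiniteLength_iff_isNoetherian_isArtinian.2
    ⟨isNoetherian_of_isNoetherianRing_of_finite H M, inferInstance⟩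
end
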